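/- arXiv:2512.12944 — 3 statements merged into one kernel-verified Lean document; each statement's English description precedes it below -/
import Mathlib

section
/- Let S be a nonempty finite set and let P : S × S → ℝ be a row-stochastic matrix (all entries nonnegative and each row sums to 1). Let π : S → ℝ be a probability vector with π P = π, and let ε ∈ (0,1] satisfy the Doeblin minorization P(x,y) ≥ ε·π(y) for all x, y ∈ S. Then for any two probability vectors μ, ν on S, ∑_{y∈S} |(μP)(y) − (νP)(y)| ≤ (1 − ε) · ∑_{x∈S} |μ(x) − ν(x)|. -/
/-- Doeblin–Dobrushin contraction bound for a row-stochastic matrix satisfying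
a Doeblin minorization `P x y ≥ ε · π y`. -/
theorem doeblin_dobrushin_contraction
    {S : Type*} [Fintype S] [Nonempty S]
    (P : S → S → ℝ)
    (hP_nonneg : ∀ x y, 0 ≤ P x y)
    (hP_row : ∀ x, ∑ y, P x y = 1)
    (π : S → ℝ)
    (hπ_nonneg : ∀ x, 0 ≤ π x)
    (hπ_sum : ∑ x, π x = 1)
    (hπ_stat : ∀ y, ∑ x, π x * P x y = π y)
    (ε : ℝ) (hε0 : 0 < ε) (hε1 : ε ≤ 1)
    (hDoeblin : ∀ x y, ε * π y ≤ P x y)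
    (μ ν : S → ℝ)
    (hμ_nonneg : ∀ x, 0 ≤ μ x) (hμ_sum : ∑ x, μ x = 1)
    (hν_nonneg : ∀ x, 0 ≤ ν x) (hν_sum : ∑ x, ν x = 1) :
    ∑ y, |(∑ x, μ x * P x y) - (∑ x, ν x * P x y)| ≤
      (1 - ε) * ∑ x, |μ x - ν x| := by
  have hd0 : ∑ x, (μ x - ν x) = 0 := by
    rw [Finset.sum_sub_distrib, hμ_sum, hν_sum]; ring
  have key : ∀ y, (∑ x, μ x * P x y) - (∑ x, ν x * P x y)
      = ∑ x, (μ x - ν x) * (P x y - ε * π y) := by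
    intro y
    have : ∑ x, (μ x - ν x) * (P x y - ε * π y)
        = (∑ x, μ x * P x y) - (∑ x, ν x * P x y) - (ε * π y) * ∑ x, (μ x - ν x) := by
      rw [Finset.mul_sum, ← Finset.sum_sub_distrib, ← Finset.sum_sub_distrib,
        ]
      exact Finset.sum_congr rfl fun x _ => by ring
    rw [this, hd0]; ring
  calc ∑ y, |(∑ x, μ x * P x y) - (∑ x, ν x * P x y)|
      ≤ ∑ y, ∑ x, |μ x - ν x| * (P x y - ε * π y) := by
        refine Finset.sum_le_sum fun y _ => ?_
        rw [key y]
        refine (Finset.abs_sum_le_sum_abs _ _).trans (Finset.sum_le_sum fun x _ => ?_)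
        rw [abs_mul, abs_of_nonneg (sub_nonneg.2 (hDoeblin x y))]
    _ = ∑ x, |μ x - ν x| * (1 - ε) := by
        rw [Finset.sum_comm]
        refine Finset.sum_congr rfl fun x _ => ?_
        rw [← Finset.mul_sum, Finset.sum_sub_distrib, hP_row, ← Finset.mul_sum, hπ_sum, mul_one]
    _ = (1 - ε) * ∑ x, |μ x - ν x| := by rw [Finset.mul_sum]; exact Finset.sum_congr rfl fun x _ => mul_comm _ _
end

section
/- Let Φ : M_n(ℂ) → M_n(ℂ) be a linear, positive, trace-preserving map, let ρ° be a state with Φ(ρ°) = ρ°, and let ε ∈ (0,1] be such that for every state ρ the Doeblin-type minorization Φ(ρ) ≥ ε·ρ° holds (i.e., Φ(ρ) − ε·ρ° is positive semidefinite). Then for every state ρ, ‖Φ(ρ) − ρ°‖₁ ≤ (1 − ε)·‖ρ − ρ°‖₁. -/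
open scoped ComplexOrder

/-- The trace norm of a matrix: `‖A‖₁ = Tr √(Aᴴ A)`.  For a Hermitian matrix this is
the sum of the absolute values of its eigenvalues. -/
noncomputable def traceNorm {n : ℕ} (A : Matrix (Fin n) (Fin n) ℂ) : ℝ :=
  ((Matrix.posSemidef_conjTranspose_mul_self A).1.eigenvectorUnitary.1 *
    Matrix.diagonal (((↑) : ℝ → ℂ) ∘ (√·) ∘ (Matrix.posSemidef_conjTranspose_mul_self A).1.eigenvalues) *
    (star (Matrix.posSemidef_conjTranspose_mul_self A).1.eigenvectorUnitary : Matrix (Fin n) (Fin n) ℂ)).trace.re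

/-!
Write `ρ - ρ₀ = P - Q` with `P = (ρ - ρ₀)⁺` and `Q = (ρ - ρ₀)⁻`; since `Tr ρ = Tr ρ₀`, both have
trace `‖ρ - ρ₀‖₁ / 2`. The minorization, rescaled from states to all positive matrices, gives
`Φ P ≥ ε Tr P • ρ₀` and `Φ Q ≥ ε Tr Q • ρ₀`. Hence `Φ ρ - ρ₀ = Φ P - Φ Q` is the difference of two
positive matrices of trace `(1 - ε) Tr P`, and the trace norm of such a difference is at most the
sum of the traces.
-/

open scoped MatrixOrder
open Matrix

namespace Matrix

section RCLike

variable {ι 𝕜 : Type*} [Fintype ι] [DecidableEq ι] [RCLike 𝕜]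

theorem IsHermitian.trace_cfc {A : Matrix ι ι 𝕜} (hA : A.IsHermitian) (f : ℝ → ℝ) :
    (cfc f A).trace = ∑ i, (f (hA.eigenvalues i) : 𝕜) := by
  rw [hA.cfc_eq, IsHermitian.cfc, Unitary.conjStarAlgAut_apply, trace_mul_cycle,
    UnitaryGroup.star_mul_self, one_mul, trace_diagonal]
  rfl

theorem sum_star_dotProduct_mulVec_eq_trace (b : OrthonormalBasis ι 𝕜 (EuclideanSpace 𝕜 ι))
    (A : Matrix ι ι 𝕜) : ∑ i, star (b i).ofLp ⬝ᵥ A *ᵥ (b i).ofLp = A.trace := by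
  have h := LinearMap.trace_eq_sum_inner (toLpLin 2 2 A) b
  rw [toLpLin_eq_toLin, LinearMap.trace_eq_matrix_trace 𝕜 (PiLp.basisFun 2 𝕜 ι),
    LinearMap.toMatrix_toLin] at h
  rw [h]
  refine Finset.sum_congr rfl fun i _ => ?_
  rw [EuclideanSpace.inner_eq_star_dotProduct, dotProduct_comm]
  rfl

end RCLike

section Complex

variable {ι : Type*} [Fintype ι]

theorem PosSemidef.map_sub_trace_smul_of_forall_trace_eq_one
    (Φ : Matrix ι ι ℂ →ₗ[ℂ] Matrix ι ι ℂ) {σ : Matrix ι ι ℂ} {c : ℂ}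
    (hΦ : ∀ ρ : Matrix ι ι ℂ, ρ.PosSemidef → ρ.trace = 1 → (Φ ρ - c • σ).PosSemidef)
    {A : Matrix ι ι ℂ} (hA : A.PosSemidef) : (Φ A - (c * A.trace) • σ).PosSemidef := by
  obtain h | h := eq_or_ne A.trace 0
  · rw [hA.trace_eq_zero_iff.mp h]
    simpa using PosSemidef.zero
  · have hA' : (A.trace⁻¹ • A).PosSemidef := hA.smul (inv_nonneg.mpr hA.trace_nonneg)
    have := (hΦ _ hA' (by rw [trace_smul, smul_eq_mul, inv_mul_cancel₀ h])).smul hA.trace_nonneg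
    rwa [smul_sub, map_smul, smul_smul, mul_inv_cancel₀ h, one_smul, smul_smul, mul_comm] at this

end Complex

end Matrix

section TraceNorm

variable {n : ℕ}

theorem traceNorm_eq_re_trace_cfcAbs (A : Matrix (Fin n) (Fin n) ℂ) :
    traceNorm A = (CFC.abs A).trace.re := by
  have hAA := posSemidef_conjTranspose_mul_self A
  rw [CFC.abs, star_eq_conjTranspose, CFC.sqrt_eq_real_sqrt (Aᴴ * A) hAA.nonneg, cfcₙ_eq_cfc,
    hAA.1.cfc_eq]
  rfl

theorem Matrix.IsHermitian.traceNorm_eq_sum_abs_eigenvalues {A : Matrix (Fin n) (Fin n) ℂ}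
    (hA : A.IsHermitian) : traceNorm A = ∑ i, |hA.eigenvalues i| := by
  rw [traceNorm_eq_re_trace_cfcAbs, CFC.abs_eq_cfc_norm A hA.isSelfAdjoint, hA.trace_cfc]
  simp

theorem Matrix.IsHermitian.traceNorm_eq_re_trace_posPart_add_re_trace_negPart
    {A : Matrix (Fin n) (Fin n) ℂ} (hA : A.IsHermitian) :
    traceNorm A = (A⁺).trace.re + (A⁻).trace.re := by
  rw [traceNorm_eq_re_trace_cfcAbs, ← CFC.posPart_add_negPart A hA.isSelfAdjoint, trace_add,
    Complex.add_re]

theorem traceNorm_sub_le_of_posSemidef {A B : Matrix (Fin n) (Fin n) ℂ} (hA : A.PosSemidef)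
    (hB : B.PosSemidef) : traceNorm (A - B) ≤ A.trace.re + B.trace.re := by
  have hAB := hA.1.sub hB.1
  have h_abs_le (i : Fin n) : |hAB.eigenvalues i| ≤
      RCLike.re (star (hAB.eigenvectorBasis i).ofLp ⬝ᵥ A *ᵥ (hAB.eigenvectorBasis i).ofLp) +
      RCLike.re (star (hAB.eigenvectorBasis i).ofLp ⬝ᵥ B *ᵥ (hAB.eigenvectorBasis i).ofLp) := by
    rw [hAB.eigenvalues_eq, sub_mulVec, dotProduct_sub, map_sub]
    have := hA.re_dotProduct_nonneg (hAB.eigenvectorBasis i).ofLp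
    have := hB.re_dotProduct_nonneg (hAB.eigenvectorBasis i).ofLp
    exact abs_sub_le_iff.mpr ⟨by linarith, by linarith⟩
  calc traceNorm (A - B) = ∑ i, |hAB.eigenvalues i| := hAB.traceNorm_eq_sum_abs_eigenvalues
    _ ≤ _ := Finset.sum_le_sum fun i _ => h_abs_le i
    _ = A.trace.re + B.trace.re := by
      rw [Finset.sum_add_distrib, ← map_sum, ← map_sum, sum_star_dotProduct_mulVec_eq_trace,
        sum_star_dotProduct_mulVec_eq_trace]
      rfl

end TraceNorm

theorem doeblin_one_step_contraction_general {n : ℕ}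
    (Φ : Matrix (Fin n) (Fin n) ℂ →ₗ[ℂ] Matrix (Fin n) (Fin n) ℂ)
    (htr : ∀ A : Matrix (Fin n) (Fin n) ℂ, (Φ A).trace = A.trace)
    (ρ₀ : Matrix (Fin n) (Fin n) ℂ) (hρ₀ : ρ₀.PosSemidef) (hρ₀tr : ρ₀.trace = 1)
    (hfix : Φ ρ₀ = ρ₀)
    (ε : ℝ)
    (hDoeblin : ∀ ρ : Matrix (Fin n) (Fin n) ℂ, ρ.PosSemidef → ρ.trace = 1 →
      (Φ ρ - (ε : ℂ) • ρ₀).PosSemidef)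
    (ρ : Matrix (Fin n) (Fin n) ℂ) (hρ : ρ.PosSemidef) (hρtr : ρ.trace = 1) :
    traceNorm (Φ ρ - ρ₀) ≤ (1 - ε) * traceNorm (ρ - ρ₀) := by
  have hΔ : (ρ - ρ₀).IsHermitian := hρ.1.sub hρ₀.1
  set P := (ρ - ρ₀)⁺
  set Q := (ρ - ρ₀)⁻
  have hPQ : P - Q = ρ - ρ₀ := CFC.posPart_sub_negPart _ hΔ.isSelfAdjoint
  have htrPQ : P.trace = Q.trace := by
    rw [← sub_eq_zero, ← trace_sub, hPQ, trace_sub, hρtr, hρ₀tr, sub_self]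
  have hminor {A : Matrix (Fin n) (Fin n) ℂ} (hA : 0 ≤ A) :=
    hA.posSemidef.map_sub_trace_smul_of_forall_trace_eq_one Φ hDoeblin
  have hsplit : Φ ρ - ρ₀ = (Φ P - (ε * P.trace) • ρ₀) - (Φ Q - (ε * Q.trace) • ρ₀) := by
    rw [htrPQ, sub_sub_sub_cancel_right, ← map_sub, hPQ, map_sub, hfix]
  calc traceNorm (Φ ρ - ρ₀)
      ≤ (Φ P - (ε * P.trace) • ρ₀).trace.re + (Φ Q - (ε * Q.trace) • ρ₀).trace.re := by
        rw [hsplit]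
        exact traceNorm_sub_le_of_posSemidef (hminor (CFC.posPart_nonneg _))
          (hminor (CFC.negPart_nonneg _))
    _ = (1 - ε) * (P.trace.re + Q.trace.re) := by
        simp only [trace_sub, trace_smul, htr, hρ₀tr, smul_eq_mul, mul_one, Complex.sub_re,
          Complex.re_ofReal_mul]
        ring
    _ = (1 - ε) * traceNorm (ρ - ρ₀) := by
        rw [hΔ.traceNorm_eq_re_trace_posPart_add_re_trace_negPart]

/-- One-step trace-norm contraction from a Doeblin-type minorization
`Φ(ρ) ≥ ε·ρ°` for a positive trace-preserving map `Φ` with stationary state `ρ°`. -/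
theorem doeblin_one_step_contraction {n : ℕ}
    (Φ : Matrix (Fin n) (Fin n) ℂ →ₗ[ℂ] Matrix (Fin n) (Fin n) ℂ)
    (hpos : ∀ A : Matrix (Fin n) (Fin n) ℂ, A.PosSemidef → (Φ A).PosSemidef)
    (htr : ∀ A : Matrix (Fin n) (Fin n) ℂ, (Φ A).trace = A.trace)
    (ρ₀ : Matrix (Fin n) (Fin n) ℂ) (hρ₀ : ρ₀.PosSemidef) (hρ₀tr : ρ₀.trace = 1)
    (hfix : Φ ρ₀ = ρ₀)
    (ε : ℝ) (hε0 : 0 < ε) (hε1 : ε ≤ 1)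
    (hDoeblin : ∀ ρ : Matrix (Fin n) (Fin n) ℂ, ρ.PosSemidef → ρ.trace = 1 →
      (Φ ρ - (ε : ℂ) • ρ₀).PosSemidef)
    (ρ : Matrix (Fin n) (Fin n) ℂ) (hρ : ρ.PosSemidef) (hρtr : ρ.trace = 1) :
    traceNorm (Φ ρ - ρ₀) ≤ (1 - ε) * traceNorm (ρ - ρ₀) :=
  doeblin_one_step_contraction_general Φ htr ρ₀ hρ₀ hρ₀tr hfix ε hDoeblin ρ hρ hρtr
end

section
/- Let V be a finite-dimensional real normed vector space, let A : V → V be a linear map, and let g > 0 be such that for all t ≥ 0 and all x ∈ V, ‖exp(tA)(x)‖ ≤ e^{−gt}·‖x‖, where exp(tA) is the operator exponential. Then A is bijective, and for all x ∈ V, g·‖x‖ ≤ ‖A(x)‖; equivalently, ‖A⁻¹(y)‖ ≤ ‖y‖/g for all y ∈ V. -/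
/-!
Along the orbit `t ↦ exp (t • A) x` the norm starts at `‖x‖` and stays below `exp (-g t) ‖x‖`,
so it must initially decrease at least at rate `g ‖x‖`; since it cannot decrease faster than
the speed `‖A x‖` of the orbit at `t = 0`, this gives `g ‖x‖ ≤ ‖A x‖`. Hence `A` is injective,
so invertible in finite dimension, and the same inequality bounds the inverse by `1 / g`.
-/

open Filter Set Topology

theorem neg_le_norm_of_hasDerivWithinAt_of_norm_le {E : Type*} [NormedAddCommGroup E]
    [NormedSpace ℝ E] {f : ℝ → E} {φ : ℝ → ℝ} {f' : E} {φ' a : ℝ}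
    (hf : HasDerivWithinAt f f' (Ioi a) a) (hφ : HasDerivWithinAt φ φ' (Ioi a) a)
    (ha : ‖f a‖ = φ a) (hle : ∀ᶠ t in 𝓝[>] a, ‖f t‖ ≤ φ t) : -φ' ≤ ‖f'‖ := by
  have hf_slope := (hasDerivWithinAt_iff_tendsto_slope' self_notMem_Ioi).mp hf
  have hφ_slope := (hasDerivWithinAt_iff_tendsto_slope' self_notMem_Ioi).mp hφ
  refine le_of_tendsto_of_tendsto hφ_slope.neg hf_slope.norm ?_
  filter_upwards [hle, self_mem_nhdsWithin] with t ht (hat : a < t)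
  have hpos : 0 < t - a := sub_pos.mpr hat
  rw [slope_def_field, slope_def_module, norm_smul, Real.norm_eq_abs, abs_inv,
    abs_of_pos hpos, ← neg_div, inv_mul_eq_div]
  gcongr
  linarith [norm_sub_norm_le (f a) (f t), norm_sub_rev (f a) (f t)]

theorem hasDerivAt_exp_smul_apply {V : Type*} [NormedAddCommGroup V] [NormedSpace ℝ V]
    [CompleteSpace V] (A : V →L[ℝ] V) (x : V) (t : ℝ) :
    HasDerivAt (fun s : ℝ ↦ NormedSpace.exp (s • A) x) (NormedSpace.exp (t • A) (A x)) t := by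
  simpa using (hasDerivAt_exp_smul_const A t).clm_apply (hasDerivAt_const t x)

theorem mul_norm_le_norm_apply_of_norm_exp_smul_apply_le {V : Type*} [NormedAddCommGroup V]
    [NormedSpace ℝ V] [CompleteSpace V] (A : V →L[ℝ] V) (g : ℝ) (x : V)
    (hdecay : ∀ t : ℝ, 0 < t → ‖NormedSpace.exp (t • A) x‖ ≤ Real.exp (-g * t) * ‖x‖) :
    g * ‖x‖ ≤ ‖A x‖ := by
  have hφ : HasDerivAt (fun t ↦ Real.exp (-g * t) * ‖x‖) (-g * ‖x‖) 0 := by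
    simpa using (((hasDerivAt_id (0 : ℝ)).const_mul (-g)).exp).mul_const ‖x‖
  simpa using neg_le_norm_of_hasDerivWithinAt_of_norm_le
    (hasDerivAt_exp_smul_apply A x 0).hasDerivWithinAt hφ.hasDerivWithinAt (by simp)
    (eventually_nhdsWithin_of_forall hdecay)

theorem injective_of_mul_norm_le_norm_apply {E F 𝓕 : Type*} [NormedAddCommGroup E]
    [SeminormedAddCommGroup F] [FunLike 𝓕 E F] [AddMonoidHomClass 𝓕 E F] (f : 𝓕) {g : ℝ}
    (hg : 0 < g) (hf : ∀ x, g * ‖x‖ ≤ ‖f x‖) : Function.Injective f := by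
  refine (injective_iff_map_eq_zero f).mpr fun x hx ↦ norm_le_zero_iff.mp ?_
  have := hf x
  rw [hx, norm_zero] at this
  exact nonpos_of_mul_nonpos_right this hg

/-- If the operator semigroup `exp(tA)` on a finite-dimensional real normed space decays
exponentially at rate `g > 0`, then `A` is bijective with `g‖x‖ ≤ ‖A x‖`, i.e.
`‖A⁻¹ y‖ ≤ ‖y‖ / g`. -/
theorem bijective_and_resolvent_bound_of_exp_decay
    {V : Type*} [NormedAddCommGroup V] [NormedSpace ℝ V] [FiniteDimensional ℝ V]
    (A : V →L[ℝ] V) (g : ℝ) (hg : 0 < g)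
    (hdecay : ∀ t : ℝ, 0 ≤ t → ∀ x : V,
      ‖(NormedSpace.exp (t • A)) x‖ ≤ Real.exp (-g * t) * ‖x‖) :
    Function.Bijective A ∧ (∀ x : V, g * ‖x‖ ≤ ‖A x‖) ∧
      ∃ B : V →L[ℝ] V, B.comp A = ContinuousLinearMap.id ℝ V ∧
        A.comp B = ContinuousLinearMap.id ℝ V ∧ ∀ y : V, ‖B y‖ ≤ ‖y‖ / g := by
  have hlow (x : V) : g * ‖x‖ ≤ ‖A x‖ :=
    mul_norm_le_norm_apply_of_norm_exp_smul_apply_le A g x fun t ht ↦ hdecay t ht.le x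
  have hinj : Function.Injective A := injective_of_mul_norm_le_norm_apply A hg hlow
  have hsurj : Function.Surjective A :=
    LinearMap.injective_iff_surjective (f := (A : V →ₗ[ℝ] V)) |>.mp hinj
  set e := ContinuousLinearEquiv.ofBijective A (LinearMap.ker_eq_bot.mpr hinj)
    (LinearMap.range_eq_top.mpr hsurj)
  refine ⟨⟨hinj, hsurj⟩, hlow, e.symm, ?_, ?_, fun y ↦ ?_⟩
  · simpa [e, ContinuousLinearEquiv.coe_ofBijective] using e.coe_symm_comp_coe
  · simpa [e, ContinuousLinearEquiv.coe_ofBijective] using e.coe_comp_coe_symm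
  · rw [le_div_iff₀ hg, mul_comm]
    simpa [e] using hlow (e.symm y)
end
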